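/- arXiv:2310.12036 — 6 statements merged into one kernel-verified Lean document; each statement's English description precedes it below -/
import Mathlib

section
/- Let Y be a finite set, μ ∈ Δ_Y, π, π_ref : Y → ℝ_{>0}, and p* : Y×Y → [0,1] with p*(y,y') + p*(y',y) = 1. Define h_π(y,y') = log(π(y)π_ref(y')/(π(y')π_ref(y))) and p_y = E_{y'~μ}[p*(y,y')]. Then E_{y,y'~μ}[h_π(y,y')·p*(y,y')] = E_{y,y'~μ}[h_π(y,y')·(p_y - p_{y'})], i.e., the cross-terms of the IPO losses in Equations (11) and (13) coincide. -/
theorem stmt_6 {Y : Type*} [Fintype Y] (μ : Y → ℝ)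
    (hμ0 : ∀ y, 0 ≤ μ y) (hμ1 : ∑ y, μ y = 1)
    (π πref : Y → ℝ) (hπ : ∀ y, 0 < π y) (href : ∀ y, 0 < πref y)
    (p : Y → Y → ℝ) (hp01 : ∀ y y', 0 ≤ p y y' ∧ p y y' ≤ 1)
    (hp : ∀ y y', p y y' + p y' y = 1) :
    ∑ y, ∑ y', μ y * μ y' *
        (Real.log (π y * πref y' / (π y' * πref y)) * p y y')
      = ∑ y, ∑ y', μ y * μ y' *
          (Real.log (π y * πref y' / (π y' * πref y)) *
            ((∑ z, μ z * p y z) - ∑ z, μ z * p y' z)) := by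
  classical
  set f : Y → ℝ := fun y => Real.log (π y / πref y) with hf
  have hlog : ∀ y y', Real.log (π y * πref y' / (π y' * πref y)) = f y - f y' := by
    intro y y'
    have h1 : π y * πref y' / (π y' * πref y) = (π y / πref y) / (π y' / πref y') := by
      field_simp
    rw [h1, Real.log_div (div_pos (hπ y) (href y)).ne' (div_pos (hπ y') (href y')).ne']
  set q : Y → ℝ := fun y => ∑ z, μ z * p y z with hq
  have hcol : ∀ y', ∑ y, μ y * p y y' = 1 - q y' := by
    intro y'
    have hcong : ∀ y ∈ Finset.univ, μ y * p y y' = μ y - μ y * p y' y := by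
      intro y _
      have h := hp y y'
      linear_combination μ y * h
    rw [Finset.sum_congr rfl hcong, Finset.sum_sub_distrib, hμ1, hq]
  have hprod : ∀ g h : Y → ℝ,
      ∑ y, ∑ y', μ y * μ y' * (g y * h y')
        = (∑ y, μ y * g y) * (∑ y, μ y * h y) := by
    intro g h
    rw [Finset.sum_mul_sum]
    exact Finset.sum_congr rfl fun y _ => Finset.sum_congr rfl fun y' _ => by ring
  have hA : ∑ y, μ y * q y = ∑ y, ∑ z, μ y * μ z * p y z := by
    refine Finset.sum_congr rfl fun y _ => ?_
    rw [hq, Finset.mul_sum]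
    exact Finset.sum_congr rfl fun z _ => by ring
  have hB : ∑ y, ∑ z, μ y * μ z * p z y = ∑ y, ∑ z, μ y * μ z * p y z := by
    rw [Finset.sum_comm]
    exact Finset.sum_congr rfl fun y _ => Finset.sum_congr rfl fun z _ => by ring
  have hsum : (∑ y, ∑ z, μ y * μ z * p y z) + (∑ y, ∑ z, μ y * μ z * p z y) = 1 := by
    rw [← Finset.sum_add_distrib]
    have : ∀ y ∈ Finset.univ, (∑ z, μ y * μ z * p y z) + (∑ z, μ y * μ z * p z y)
        = ∑ z, μ y * μ z := by
      intro y _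
      rw [← Finset.sum_add_distrib]
      refine Finset.sum_congr rfl fun z _ => ?_
      have h := hp y z
      linear_combination μ y * μ z * h
    rw [Finset.sum_congr rfl this, ← Finset.sum_mul_sum, hμ1]
    norm_num
  have hhalf : ∑ y, μ y * q y = 1 / 2 := by
    rw [hA]; linarith [hB, hsum]
  -- now the main computation
  have hL : ∑ y, ∑ y', μ y * μ y' *
        (Real.log (π y * πref y' / (π y' * πref y)) * p y y')
      = 2 * (∑ y, μ y * (f y * q y)) - ∑ y, μ y * f y := by
    have step : ∀ y y', μ y * μ y' * (Real.log (π y * πref y' / (π y' * πref y)) * p y y')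
        = (μ y * f y) * (μ y' * p y y') - (μ y' * f y') * (μ y * p y y') := by
      intro y y'; rw [hlog]; ring
    calc ∑ y, ∑ y', μ y * μ y' * (Real.log (π y * πref y' / (π y' * πref y)) * p y y')
        = (∑ y, ∑ y', (μ y * f y) * (μ y' * p y y'))
          - ∑ y, ∑ y', (μ y' * f y') * (μ y * p y y') := by
          rw [← Finset.sum_sub_distrib]
          refine Finset.sum_congr rfl fun y _ => ?_
          rw [← Finset.sum_sub_distrib]
          exact Finset.sum_congr rfl fun y' _ => step y y'
      _ = (∑ y, μ y * (f y * q y)) - ∑ y', (μ y' * f y') * (1 - q y') := by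
          congr 1
          · refine Finset.sum_congr rfl fun y _ => ?_
            rw [← Finset.mul_sum, hq]
            ring_nf
          · rw [Finset.sum_comm]
            refine Finset.sum_congr rfl fun y' _ => ?_
            rw [← Finset.mul_sum, hcol y']
      _ = 2 * (∑ y, μ y * (f y * q y)) - ∑ y, μ y * f y := by
          have : ∑ y', (μ y' * f y') * (1 - q y')
              = (∑ y, μ y * f y) - ∑ y, μ y * (f y * q y) := by
            rw [← Finset.sum_sub_distrib]
            exact Finset.sum_congr rfl fun y _ => by ring
          rw [this]; ring
  have hR : ∑ y, ∑ y', μ y * μ y' *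
          (Real.log (π y * πref y' / (π y' * πref y)) *
            ((∑ z, μ z * p y z) - ∑ z, μ z * p y' z))
      = 2 * (∑ y, μ y * (f y * q y)) - ∑ y, μ y * f y := by
    have step : ∀ y y', μ y * μ y' *
          (Real.log (π y * πref y' / (π y' * πref y)) * (q y - q y'))
        = μ y * μ y' * ((f y * q y) * 1) + μ y * μ y' * (1 * (f y' * q y'))
          - μ y * μ y' * (f y * q y') - μ y * μ y' * (f y' * q y) := by
      intro y y'; rw [hlog]; ring
    calc ∑ y, ∑ y', μ y * μ y' *
          (Real.log (π y * πref y' / (π y' * πref y)) * (q y - q y'))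
        = (∑ y, ∑ y', μ y * μ y' * ((f y * q y) * 1))
          + (∑ y, ∑ y', μ y * μ y' * (1 * (f y' * q y')))
          - (∑ y, ∑ y', μ y * μ y' * (f y * q y'))
          - (∑ y, ∑ y', μ y * μ y' * (f y' * q y)) := by
          simp only [← Finset.sum_sub_distrib, ← Finset.sum_add_distrib]
          exact Finset.sum_congr rfl fun y _ => Finset.sum_congr rfl fun y' _ => step y y'
      _ = (∑ y, μ y * (f y * q y)) * (∑ y, μ y * 1)
          + (∑ y, μ y * 1) * (∑ y, μ y * (f y * q y))
          - (∑ y, μ y * f y) * (∑ y, μ y * q y)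
          - (∑ y, μ y * f y) * (∑ y, μ y * q y) := by
          rw [hprod, hprod (fun _ => 1), hprod f q,
            show (∑ y, ∑ y', μ y * μ y' * (f y' * q y))
              = ∑ y, ∑ y', μ y * μ y' * (q y * f y') from
              Finset.sum_congr rfl fun y _ => Finset.sum_congr rfl fun y' _ => by ring,
            hprod q f]
          ring
      _ = 2 * (∑ y, μ y * (f y * q y)) - ∑ y, μ y * f y := by
          have h1 : (∑ y, μ y * 1) = 1 := by simpa using hμ1
          rw [h1, hhalf]; ring
  rw [hL, hR]
end

section
/- For any policies π, π_ref with full support on a finite set Y and symmetric-complement preference p*, the population IPO loss E_{y,y'~μ}[(h_π(y,y') - τ^{-1}·p*(y≻y'))^2] equals E_{y,y'~μ}[(h_π(y,y') - τ^{-1}(p*(y≻μ) - p*(y'≻μ)))^2] plus a constant independent of π. -/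
theorem stmt_7 {Y : Type*} [Fintype Y] (μ : Y → ℝ)
    (hμ0 : ∀ y, 0 ≤ μ y) (hμ1 : ∑ y, μ y = 1)
    (τ : ℝ) (hτ : 0 < τ)
    (πref : Y → ℝ) (href : ∀ y, 0 < πref y)
    (p : Y → Y → ℝ) (hp01 : ∀ y y', 0 ≤ p y y' ∧ p y y' ≤ 1)
    (hp : ∀ y y', p y y' + p y' y = 1) :
    ∃ C : ℝ, ∀ π : Y → ℝ, (∀ y, 0 < π y) → ∑ y, π y = 1 →
      ∑ y, ∑ y', μ y * μ y' *
          (Real.log (π y * πref y' / (π y' * πref y)) - τ⁻¹ * p y y')^2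
        = (∑ y, ∑ y', μ y * μ y' *
            (Real.log (π y * πref y' / (π y' * πref y))
              - τ⁻¹ * ((∑ z, μ z * p y z) - ∑ z, μ z * p y' z))^2) + C := by
  classical
  set q : Y → ℝ := fun y => ∑ z, μ z * p y z with hqdef
  -- basic facts about q
  have hq2 : ∀ y, ∑ z, μ z * p z y = 1 - q y := by
    intro y
    have h1 : ∀ z ∈ Finset.univ, μ z * p z y = μ z - μ z * p y z := by
      intro z _
      linear_combination μ z * hp y z
    rw [Finset.sum_congr rfl h1, Finset.sum_sub_distrib, hμ1]
  have hSq : ∑ y, μ y * q y = 1 / 2 := by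
    have h1 : ∑ y, μ y * (1 - q y) = ∑ y, μ y * q y := by
      calc ∑ y, μ y * (1 - q y) = ∑ y, μ y * ∑ z, μ z * p z y := by
            refine Finset.sum_congr rfl fun y _ => ?_
            rw [hq2 y]
        _ = ∑ y, ∑ z, μ z * (μ y * p z y) := by
            refine Finset.sum_congr rfl fun y _ => ?_
            rw [Finset.mul_sum]
            refine Finset.sum_congr rfl fun z _ => by ring
        _ = ∑ z, ∑ y, μ z * (μ y * p z y) := Finset.sum_comm
        _ = ∑ z, μ z * q z := by
            refine Finset.sum_congr rfl fun z _ => ?_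
            rw [← Finset.mul_sum]
      -- q z = ∑ y, μ y * p z y  definitionally
    have h2 : ∑ y, μ y * (1 - q y) = 1 - ∑ y, μ y * q y := by
      have : ∀ y ∈ Finset.univ, μ y * (1 - q y) = μ y - μ y * q y := by
        intro y _; ring
      rw [Finset.sum_congr rfl this, Finset.sum_sub_distrib, hμ1]
    linarith
  -- key cancellation lemma
  have key : ∀ f : Y → ℝ,
      ∑ y, ∑ y', μ y * μ y' * ((f y - f y') * (p y y' - (q y - q y'))) = 0 := by
    intro f
    have hq1 : ∀ y, ∑ z, μ z * p y z = q y := fun y => rfl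
    have A1 : ∑ y, ∑ y', μ y * μ y' * (f y * p y y') = ∑ y, μ y * f y * q y := by
      refine Finset.sum_congr rfl fun y _ => ?_
      calc ∑ y', μ y * μ y' * (f y * p y y')
          = ∑ y', (μ y * f y) * (μ y' * p y y') :=
            Finset.sum_congr rfl fun y' _ => by ring
        _ = (μ y * f y) * ∑ y', μ y' * p y y' := (Finset.mul_sum _ _ _).symm
        _ = μ y * f y * q y := by rw [hq1 y]
    have A2 : ∑ y, ∑ y', μ y * μ y' * (f y * q y) = ∑ y, μ y * f y * q y := by
      refine Finset.sum_congr rfl fun y _ => ?_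
      calc ∑ y', μ y * μ y' * (f y * q y)
          = ∑ y', (μ y * f y * q y) * μ y' :=
            Finset.sum_congr rfl fun y' _ => by ring
        _ = (μ y * f y * q y) * ∑ y', μ y' := (Finset.mul_sum _ _ _).symm
        _ = μ y * f y * q y := by rw [hμ1, mul_one]
    have A3 : ∑ y, ∑ y', μ y * μ y' * (f y * q y') = (∑ y, μ y * f y) * (1 / 2) := by
      rw [Finset.sum_mul]
      refine Finset.sum_congr rfl fun y _ => ?_
      calc ∑ y', μ y * μ y' * (f y * q y')
          = ∑ y', (μ y * f y) * (μ y' * q y') :=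
            Finset.sum_congr rfl fun y' _ => by ring
        _ = (μ y * f y) * ∑ y', μ y' * q y' := (Finset.mul_sum _ _ _).symm
        _ = μ y * f y * (1 / 2) := by rw [hSq]
    have A4 : ∑ y, ∑ y', μ y * μ y' * (f y' * p y y')
        = (∑ y, μ y * f y) - ∑ y, μ y * f y * q y := by
      rw [Finset.sum_comm, ← Finset.sum_sub_distrib]
      refine Finset.sum_congr rfl fun y' _ => ?_
      calc ∑ y, μ y * μ y' * (f y' * p y y')
          = ∑ y, (μ y' * f y') * (μ y * p y y') :=
            Finset.sum_congr rfl fun y _ => by ring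
        _ = (μ y' * f y') * ∑ y, μ y * p y y' := (Finset.mul_sum _ _ _).symm
        _ = (μ y' * f y') * (1 - q y') := by rw [hq2 y']
        _ = μ y' * f y' - μ y' * f y' * q y' := by ring
    have A5 : ∑ y, ∑ y', μ y * μ y' * (f y' * q y) = (∑ y, μ y * f y) * (1 / 2) := by
      rw [Finset.sum_comm, Finset.sum_mul]
      refine Finset.sum_congr rfl fun y' _ => ?_
      calc ∑ y, μ y * μ y' * (f y' * q y)
          = ∑ y, (μ y' * f y') * (μ y * q y) :=
            Finset.sum_congr rfl fun y _ => by ring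
        _ = (μ y' * f y') * ∑ y, μ y * q y := (Finset.mul_sum _ _ _).symm
        _ = μ y' * f y' * (1 / 2) := by rw [hSq]
    have A6 : ∑ y, ∑ y', μ y * μ y' * (f y' * q y') = ∑ y, μ y * f y * q y := by
      rw [Finset.sum_comm]
      refine Finset.sum_congr rfl fun y' _ => ?_
      calc ∑ y, μ y * μ y' * (f y' * q y')
          = ∑ y, (μ y' * f y' * q y') * μ y :=
            Finset.sum_congr rfl fun y _ => by ring
        _ = (μ y' * f y' * q y') * ∑ y, μ y := (Finset.mul_sum _ _ _).symm
        _ = μ y' * f y' * q y' := by rw [hμ1, mul_one]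
    have expand : ∀ y y', μ y * μ y' * ((f y - f y') * (p y y' - (q y - q y')))
        = μ y * μ y' * (f y * p y y') - μ y * μ y' * (f y * q y)
          + μ y * μ y' * (f y * q y') - μ y * μ y' * (f y' * p y y')
          + μ y * μ y' * (f y' * q y) - μ y * μ y' * (f y' * q y') := by
      intro y y'; ring
    calc ∑ y, ∑ y', μ y * μ y' * ((f y - f y') * (p y y' - (q y - q y')))
        = ∑ y, ∑ y', (μ y * μ y' * (f y * p y y') - μ y * μ y' * (f y * q y)
          + μ y * μ y' * (f y * q y') - μ y * μ y' * (f y' * p y y')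
          + μ y * μ y' * (f y' * q y) - μ y * μ y' * (f y' * q y')) := by
          refine Finset.sum_congr rfl fun y _ => Finset.sum_congr rfl fun y' _ => expand y y'
      _ = (∑ y, ∑ y', μ y * μ y' * (f y * p y y'))
          - (∑ y, ∑ y', μ y * μ y' * (f y * q y))
          + (∑ y, ∑ y', μ y * μ y' * (f y * q y'))
          - (∑ y, ∑ y', μ y * μ y' * (f y' * p y y'))
          + (∑ y, ∑ y', μ y * μ y' * (f y' * q y))
          - (∑ y, ∑ y', μ y * μ y' * (f y' * q y')) := by
          simp [Finset.sum_add_distrib, Finset.sum_sub_distrib]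
      _ = 0 := by rw [A1, A2, A3, A4, A5, A6]; ring
  -- choose the constant
  refine ⟨∑ y, ∑ y', μ y * μ y' * ((τ⁻¹ * p y y')^2 - (τ⁻¹ * (q y - q y'))^2),
    fun π hπ hπ1 => ?_⟩
  set f : Y → ℝ := fun y => Real.log (π y / πref y) with hfdef
  have hlog : ∀ y y', Real.log (π y * πref y' / (π y' * πref y)) = f y - f y' := by
    intro y y'
    have h1 : π y * πref y' ≠ 0 := mul_ne_zero (ne_of_gt (hπ y)) (ne_of_gt (href y'))
    have h2 : π y' * πref y ≠ 0 := mul_ne_zero (ne_of_gt (hπ y')) (ne_of_gt (href y))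
    rw [Real.log_div h1 h2, Real.log_mul (ne_of_gt (hπ y)) (ne_of_gt (href y')),
      Real.log_mul (ne_of_gt (hπ y')) (ne_of_gt (href y)), hfdef]
    simp only
    rw [Real.log_div (ne_of_gt (hπ y)) (ne_of_gt (href y)),
      Real.log_div (ne_of_gt (hπ y')) (ne_of_gt (href y'))]
    ring
  have expand2 : ∀ y y', μ y * μ y' * (f y - f y' - τ⁻¹ * p y y')^2
      = μ y * μ y' * (f y - f y' - τ⁻¹ * (q y - q y'))^2
        + μ y * μ y' * ((τ⁻¹ * p y y')^2 - (τ⁻¹ * (q y - q y'))^2)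
        - (2 * τ⁻¹) * (μ y * μ y' * ((f y - f y') * (p y y' - (q y - q y')))) := by
    intro y y'; ring
  calc ∑ y, ∑ y', μ y * μ y' * (Real.log (π y * πref y' / (π y' * πref y)) - τ⁻¹ * p y y')^2
      = ∑ y, ∑ y', (μ y * μ y' * (f y - f y' - τ⁻¹ * (q y - q y'))^2
        + μ y * μ y' * ((τ⁻¹ * p y y')^2 - (τ⁻¹ * (q y - q y'))^2)
        - (2 * τ⁻¹) * (μ y * μ y' * ((f y - f y') * (p y y' - (q y - q y'))))) := by
        refine Finset.sum_congr rfl fun y _ => Finset.sum_congr rfl fun y' _ => ?_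
        rw [hlog y y']; exact expand2 y y'
    _ = (∑ y, ∑ y', μ y * μ y' * (f y - f y' - τ⁻¹ * (q y - q y'))^2)
        + (∑ y, ∑ y', μ y * μ y' * ((τ⁻¹ * p y y')^2 - (τ⁻¹ * (q y - q y'))^2))
        - (2 * τ⁻¹) * (∑ y, ∑ y', μ y * μ y' * ((f y - f y') * (p y y' - (q y - q y')))) := by
        simp [Finset.sum_add_distrib, Finset.sum_sub_distrib, Finset.mul_sum]
    _ = (∑ y, ∑ y', μ y * μ y' * (Real.log (π y * πref y' / (π y' * πref y))
          - τ⁻¹ * ((∑ z, μ z * p y z) - ∑ z, μ z * p y' z))^2)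
        + (∑ y, ∑ y', μ y * μ y' * ((τ⁻¹ * p y y')^2 - (τ⁻¹ * (q y - q y'))^2)) := by
        rw [key f]
        have : ∀ y ∈ Finset.univ, ∀ y' ∈ (Finset.univ : Finset Y),
            μ y * μ y' * (f y - f y' - τ⁻¹ * (q y - q y'))^2
            = μ y * μ y' * (Real.log (π y * πref y' / (π y' * πref y))
              - τ⁻¹ * ((∑ z, μ z * p y z) - ∑ z, μ z * p y' z))^2 := by
          intro y _ y' _
          rw [hlog y y']
        rw [Finset.sum_congr rfl fun y hy => Finset.sum_congr rfl fun y' hy' => this y hy y' hy']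
        ring
end

section
/- Suppose μ and π_ref have equal full support J on a finite set Y, τ > 0, and g : Y → ℝ. Let π*(y) ∝ π_ref(y)exp(g(y)/τ) and L(π) = E_{y,y'~μ}[(h_π(y,y') - τ^{-1}(g(y)-g(y')))^2] with h_π(y,y') = log(π(y)π_ref(y')/(π(y')π_ref(y))). Then π* is the unique global minimizer of L among policies with support equal to J, and L(π*) = 0. -/
theorem stmt_11 {Y : Type*} [Fintype Y] [Nonempty Y]
    (τ : ℝ) (hτ : 0 < τ) (g : Y → ℝ)
    (μ πref : Y → ℝ)
    (hμ0 : ∀ y, 0 ≤ μ y) (hμ1 : ∑ y, μ y = 1)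
    (href0 : ∀ y, 0 ≤ πref y) (href1 : ∑ y, πref y = 1)
    (hsupp : ∀ y, 0 < μ y ↔ 0 < πref y)
    (πstar : Y → ℝ)
    (hπstar : ∀ y, πstar y
        = πref y * Real.exp (g y / τ) / ∑ y', πref y' * Real.exp (g y' / τ))
    (L : (Y → ℝ) → ℝ)
    (hL : ∀ π, L π = ∑ y, ∑ y', μ y * μ y' *
        (Real.log (π y * πref y' / (π y' * πref y)) - (g y - g y') / τ)^2) :
    L πstar = 0 ∧
    ∀ π : Y → ℝ, (∀ y, 0 ≤ π y) → (∑ y, π y = 1) →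
      (∀ y, 0 < π y ↔ 0 < μ y) →
      L πstar ≤ L π ∧ (L π = 0 → π = πstar) := by
  set Z := ∑ y', πref y' * Real.exp (g y' / τ) with hZdef
  have hZpos : 0 < Z := by
    obtain ⟨y1, hy1⟩ : ∃ y, 0 < πref y := by
      by_contra h
      push_neg at h
      have h0 : ∑ y, πref y = 0 :=
        Finset.sum_eq_zero fun y _ => le_antisymm (h y) (href0 y)
      rw [href1] at h0; norm_num at h0
    exact Finset.sum_pos' (fun y _ => mul_nonneg (href0 y) (Real.exp_pos _).le)
      ⟨y1, Finset.mem_univ y1, mul_pos hy1 (Real.exp_pos _)⟩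
  have key : ∀ y y', 0 < μ y → 0 < μ y' →
      Real.log (πstar y * πref y' / (πstar y' * πref y)) = (g y - g y') / τ := by
    intro y y' hy hy'
    have h1 := (hsupp y).mp hy
    have h2 := (hsupp y').mp hy'
    have heq : πstar y * πref y' / (πstar y' * πref y)
        = Real.exp ((g y - g y') / τ) := by
      rw [hπstar, hπstar, sub_div, Real.exp_sub]
      field_simp
    rw [heq, Real.log_exp]
  have hLstar : L πstar = 0 := by
    rw [hL]
    refine Finset.sum_eq_zero fun y _ => Finset.sum_eq_zero fun y' _ => ?_
    rcases eq_or_lt_of_le (hμ0 y) with h | h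
    · rw [← h]; ring
    rcases eq_or_lt_of_le (hμ0 y') with h' | h'
    · rw [← h']; ring
    rw [key y y' h h', sub_self]; ring
  refine ⟨hLstar, fun π hπ0 hπ1 hπsupp => ?_⟩
  have hterm : ∀ y y', 0 ≤ μ y * μ y' *
      (Real.log (π y * πref y' / (π y' * πref y)) - (g y - g y') / τ)^2 :=
    fun y y' => mul_nonneg (mul_nonneg (hμ0 y) (hμ0 y')) (sq_nonneg _)
  have hLpi : 0 ≤ L π := by
    rw [hL]
    exact Finset.sum_nonneg fun y _ => Finset.sum_nonneg fun y' _ => hterm y y'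
  refine ⟨hLstar ▸ hLpi, fun hLz => ?_⟩
  rw [hL] at hLz
  have hzero : ∀ y y', 0 < μ y → 0 < μ y' →
      Real.log (π y * πref y' / (π y' * πref y)) = (g y - g y') / τ := by
    intro y y' hy hy'
    have h2 := (Finset.sum_eq_zero_iff_of_nonneg
      (fun y _ => Finset.sum_nonneg fun y' _ => hterm y y')).mp hLz y (Finset.mem_univ y)
    have h3 := (Finset.sum_eq_zero_iff_of_nonneg
      (fun y' _ => hterm y y')).mp h2 y' (Finset.mem_univ y')
    have hs : (Real.log (π y * πref y' / (π y' * πref y)) - (g y - g y') / τ)^2 = 0 := by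
      rcases mul_eq_zero.mp h3 with h | h
      · rcases mul_eq_zero.mp h with h | h
        · exact absurd h hy.ne'
        · exact absurd h hy'.ne'
      · exact h
    have := sq_eq_zero_iff.mp hs
    linarith [sub_eq_zero.mp this]
  obtain ⟨y0, hy0⟩ : ∃ y, 0 < μ y := by
    by_contra h
    push_neg at h
    have h0 : ∑ y, μ y = 0 := Finset.sum_eq_zero fun y _ => le_antisymm (h y) (hμ0 y)
    rw [hμ1] at h0; norm_num at h0
  set c := π y0 / (πref y0 * Real.exp (g y0 / τ)) with hc
  have hform : ∀ y, π y = c * (πref y * Real.exp (g y / τ)) := by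
    intro y
    rcases eq_or_lt_of_le (hμ0 y) with h | h
    · have hπy : π y = 0 := le_antisymm (not_lt.mp (fun hp => (h ▸ (hπsupp y).mp hp).false)) (hπ0 y)
      have hrefy : πref y = 0 := le_antisymm (not_lt.mp (fun hp => ((hsupp y).mpr hp).ne' h.symm)) (href0 y)
      rw [hπy, hrefy]; ring
    · have hlog := hzero y y0 h hy0
      have hπy := (hπsupp y).mpr h
      have hπ0pos := (hπsupp y0).mpr hy0
      have hrefy := (hsupp y).mp h
      have href0p := (hsupp y0).mp hy0
      have hpos : 0 < π y * πref y0 / (π y0 * πref y) :=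
        div_pos (mul_pos hπy href0p) (mul_pos hπ0pos hrefy)
      have heq : π y * πref y0 / (π y0 * πref y) = Real.exp ((g y - g y0) / τ) := by
        rw [← hlog, Real.exp_log hpos]
      rw [sub_div, Real.exp_sub] at heq
      field_simp at heq
      rw [hc, div_mul_eq_mul_div, eq_div_iff (mul_pos href0p (Real.exp_pos _)).ne']
      linear_combination heq
  have hcZ : c * Z = 1 := by
    rw [← hπ1, hZdef, Finset.mul_sum]
    exact (Finset.sum_congr rfl fun y _ => hform y).symm
  funext y
  rw [hform y, hπstar y, eq_div_iff hZpos.ne']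
  linear_combination (πref y * Real.exp (g y / τ)) * hcZ
end

section
/- If π satisfies h_π(y,y') = τ^{-1}(g(y) - g(y')) for all y, y' in the common support J of μ and π_ref, and Supp(π) = J, then π(y) = π_ref(y)exp(g(y)/τ)/Z for all y ∈ J, where Z = Σ_{y'∈J} π_ref(y')exp(g(y')/τ). -/
theorem stmt_12 {Y : Type*} [Fintype Y] (J : Finset Y) (hJ : J.Nonempty)
    (τ : ℝ) (hτ : 0 < τ) (g : Y → ℝ)
    (π πref : Y → ℝ)
    (hπpos : ∀ y ∈ J, 0 < π y) (hπz : ∀ y ∉ J, π y = 0) (hπ1 : ∑ y, π y = 1)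
    (hrefpos : ∀ y ∈ J, 0 < πref y) (hrefz : ∀ y ∉ J, πref y = 0)
    (href1 : ∑ y, πref y = 1)
    (hroot : ∀ y ∈ J, ∀ y' ∈ J,
      Real.log (π y * πref y' / (π y' * πref y)) = (g y - g y') / τ) :
    ∀ y ∈ J, π y = πref y * Real.exp (g y / τ)
        / ∑ y' ∈ J, πref y' * Real.exp (g y' / τ) := by
  intro y hy
  set Z := ∑ y' ∈ J, πref y' * Real.exp (g y' / τ) with hZ
  have hZpos : 0 < Z :=
    Finset.sum_pos (fun i hi => mul_pos (hrefpos i hi) (Real.exp_pos _)) hJ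
  set c := π y / (πref y * Real.exp (g y / τ)) with hc
  have hkey : ∀ y' ∈ J, π y' = c * (πref y' * Real.exp (g y' / τ)) := by
    intro y' hy'
    have h1 := hroot y' hy' y hy
    have hpos : 0 < π y' * πref y / (π y * πref y') :=
      div_pos (mul_pos (hπpos y' hy') (hrefpos y hy))
        (mul_pos (hπpos y hy) (hrefpos y' hy'))
    have h2 : π y' * πref y / (π y * πref y') = Real.exp ((g y' - g y) / τ) := by
      rw [← h1, Real.exp_log hpos]
    have hexp : Real.exp ((g y' - g y) / τ)
        = Real.exp (g y' / τ) / Real.exp (g y / τ) := by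
      rw [sub_div, Real.exp_sub]
    rw [hexp] at h2
    have h3 : πref y ≠ 0 := (hrefpos y hy).ne'
    have h4 : π y ≠ 0 := (hπpos y hy).ne'
    have h5 : πref y' ≠ 0 := (hrefpos y' hy').ne'
    have h6 : Real.exp (g y / τ) ≠ 0 := (Real.exp_pos _).ne'
    rw [hc]
    field_simp at h2 ⊢
    nlinarith [h2]
  have hsum : ∑ y' ∈ J, π y' = 1 := by
    rw [← hπ1]
    exact Finset.sum_subset (Finset.subset_univ J) (fun x _ hx => hπz x hx)
  have hcZ : c * Z = 1 := by
    rw [hZ, Finset.mul_sum, ← hsum]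
    exact Finset.sum_congr rfl (fun y' hy' => (hkey y' hy').symm)
  have hceq : c = 1 / Z := by
    field_simp
    linarith [hcZ]
  have := hkey y hy
  rw [hceq] at this
  rw [this]; ring
end

section
/- Let Y be finite and suppose the Bradley-Terry model holds: p*(y≻y') = σ(r(y)-r(y')). Then the maximizer of E_{y~π}E_{y'~μ}[Ψ(p*(y≻y'))] - τ·KL(π||π_ref) with Ψ(q)=log(q/(1-q)) coincides with the maximizer of E_{y~π}[r(y)] - τ·KL(π||π_ref), for any τ > 0 and full-support π_ref, μ. -/
/-! Under Bradley–Terry, `Ψ(p*(y ≻ y')) = r y - r y'`, so averaging over `y' ~ μ` turns the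
preference reward into `r y - E_μ[r]`. The two objectives therefore differ by the constant
`E_μ[r]` on the simplex. -/

open Finset

open Real in
lemma Real.log_sigmoid_div_one_sub_sigmoid (x : ℝ) : log (sigmoid x / (1 - sigmoid x)) = x := by
  rw [← sigmoid_neg, ← sigmoid_mul_rexp_neg, div_mul_cancel_left₀ (sigmoid_pos x).ne',
    exp_neg, inv_inv, log_exp]

lemma isMaxOn_iff_of_forall_eq_add_const {α : Type*} {f g : α → ℝ} {s : Set α} {a : α} (c : ℝ)
    (h : ∀ x ∈ s, f x = g x + c) (ha : a ∈ s) : IsMaxOn f s a ↔ IsMaxOn g s a := by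
  simp only [isMaxOn_iff]
  refine forall₂_congr fun x hx => ?_
  rw [h x hx, h a ha, add_le_add_iff_right]

lemma sum_mul_sum_mul_sub {Y : Type*} [Fintype Y] {w μ : Y → ℝ} (hw : ∑ y, w y = 1)
    (hμ : ∑ y, μ y = 1) (r : Y → ℝ) :
    ∑ y, w y * ∑ y', μ y' * (r y - r y') = ∑ y, w y * r y - ∑ y', μ y' * r y' := by
  simp only [mul_sub, sum_sub_distrib, ← sum_mul, hμ, one_mul, hw]

theorem stmt_15_general {Y : Type*} [Fintype Y]
    (r : Y → ℝ) (τ : ℝ)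
    (μ πref : Y → ℝ)
    (hμ1 : ∑ y, μ y = 1)
    (p : Y → Y → ℝ)
    (hp : ∀ y y', p y y' = 1 / (1 + Real.exp (-(r y - r y'))))
    (J₁ J₂ : (Y → ℝ) → ℝ)
    (hJ₁ : ∀ π, J₁ π = ∑ y, π y * (∑ y', μ y' * Real.log (p y y' / (1 - p y y')))
        - τ * ∑ y, π y * Real.log (π y / πref y))
    (hJ₂ : ∀ π, J₂ π = ∑ y, π y * r y - τ * ∑ y, π y * Real.log (π y / πref y))
    (π : Y → ℝ) (hπ0 : ∀ y, 0 ≤ π y) (hπ1 : ∑ y, π y = 1) :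
    (∀ π' : Y → ℝ, (∀ y, 0 ≤ π' y) → ∑ y, π' y = 1 → J₁ π' ≤ J₁ π) ↔
    (∀ π' : Y → ℝ, (∀ y, 0 ≤ π' y) → ∑ y, π' y = 1 → J₂ π' ≤ J₂ π) := by
  have hlogOdds (y y' : Y) : Real.log (p y y' / (1 - p y y')) = r y - r y' := by
    rw [hp, one_div, ← Real.sigmoid_def, Real.log_sigmoid_div_one_sub_sigmoid]
  have hshift : ∀ π' ∈ stdSimplex ℝ Y, J₁ π' = J₂ π' + -∑ y', μ y' * r y' := by
    rintro π' ⟨-, hπ'1⟩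
    simp only [hJ₁, hJ₂, hlogOdds, sum_mul_sum_mul_sub hπ'1 hμ1]
    ring
  have hmax := isMaxOn_iff_of_forall_eq_add_const _ hshift ⟨hπ0, hπ1⟩
  simpa only [isMaxOn_iff, stdSimplex, Set.mem_ofPred_eq, and_imp] using hmax

theorem stmt_15 {Y : Type*} [Fintype Y] [Nonempty Y]
    (r : Y → ℝ) (τ : ℝ) (hτ : 0 < τ)
    (μ πref : Y → ℝ)
    (hμ : ∀ y, 0 < μ y) (hμ1 : ∑ y, μ y = 1)
    (href : ∀ y, 0 < πref y) (href1 : ∑ y, πref y = 1)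
    (p : Y → Y → ℝ)
    (hp : ∀ y y', p y y' = 1 / (1 + Real.exp (-(r y - r y'))))
    (J₁ J₂ : (Y → ℝ) → ℝ)
    (hJ₁ : ∀ π, J₁ π = ∑ y, π y * (∑ y', μ y' * Real.log (p y y' / (1 - p y y')))
        - τ * ∑ y, π y * Real.log (π y / πref y))
    (hJ₂ : ∀ π, J₂ π = ∑ y, π y * r y - τ * ∑ y, π y * Real.log (π y / πref y))
    (π : Y → ℝ) (hπ0 : ∀ y, 0 ≤ π y) (hπ1 : ∑ y, π y = 1) :
    (∀ π' : Y → ℝ, (∀ y, 0 ≤ π' y) → ∑ y, π' y = 1 → J₁ π' ≤ J₁ π) ↔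
    (∀ π' : Y → ℝ, (∀ y, 0 ≤ π' y) → ∑ y, π' y = 1 → J₂ π' ≤ J₂ π) :=
  stmt_15_general r τ μ πref hμ1 p hp J₁ J₂ hJ₁ hJ₂ π hπ0 hπ1
end

section
/- Let Y = {y₁, y₂, y₃}, π_ref uniform, μ(y₁)=μ(y₂)=1/2, μ(y₃)=0. Then every full-support policy π = (p, q, 1-p-q) with p/q = exp(τ^{-1}(p*(y₁≻μ) - p*(y₂≻μ))) is a global minimizer of L(π) = E_{y,y'~μ}[(h_π(y,y') - τ^{-1}(p*(y≻μ)-p*(y'≻μ)))²]; in particular the minimizer is not unique when Supp(μ) ⊊ Supp(π_ref). -/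
/-!
Since `μ` only charges `y₁` and `y₂` and `π_ref` is uniform, the loss of a policy reduces to
`½ (log (π y₁ / π y₂) - τ⁻¹ (p*(y₁≻μ) - p*(y₂≻μ)))²`: it sees the ratio `π y₁ / π y₂` and
nothing else. Every policy with the prescribed ratio therefore attains the minimal value `0`,
and the mass on `y₃` can be chosen freely.
-/

lemma sum_sum_mul_sq_of_antisymm (μ : Fin 3 → ℝ) (hμ2 : μ 2 = 0)
    (f : Fin 3 → Fin 3 → ℝ) (hf : ∀ y y', f y' y = -f y y') :
    ∑ y, ∑ y', μ y * μ y' * f y y' ^ 2 = 2 * μ 0 * μ 1 * f 0 1 ^ 2 := by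
  have hf00 : f 0 0 = 0 := by linarith [hf 0 0]
  have hf11 : f 1 1 = 0 := by linarith [hf 1 1]
  simp only [Fin.sum_univ_three, hμ2, hf00, hf11, hf 0 1]
  ring

lemma log_div_sub_sub_antisymm (a b u v : ℝ) :
    Real.log (b / a) - (v - u) = -(Real.log (a / b) - (u - v)) := by
  rw [← inv_div a b, Real.log_inv]
  ring

noncomputable def ratioPolicy (r t : ℝ) : Fin 3 → ℝ :=
  ![(1 - t) * r / (1 + r), (1 - t) / (1 + r), t]

section ratioPolicy

variable {r t : ℝ}

lemma ratioPolicy_pos (hr : 0 < r) (ht0 : 0 < t) (ht1 : t < 1) (y : Fin 3) :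
    0 < ratioPolicy r t y := by
  have : 0 < 1 - t := sub_pos.mpr ht1
  fin_cases y <;>
    simp only [ratioPolicy, Fin.zero_eta, Fin.mk_one, Fin.reduceFinMk, Matrix.cons_val] <;>
    positivity

lemma sum_ratioPolicy (hr : 1 + r ≠ 0) : ∑ y, ratioPolicy r t y = 1 := by
  simp only [ratioPolicy, Fin.sum_univ_three, Matrix.cons_val]
  field_simp
  ring

lemma ratioPolicy_zero_div_one (hr : 1 + r ≠ 0) (ht1 : t ≠ 1) :
    ratioPolicy r t 0 / ratioPolicy r t 1 = r := by
  have : 1 - t ≠ 0 := sub_ne_zero.mpr ht1.symm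
  simp only [ratioPolicy, Matrix.cons_val]
  field_simp

end ratioPolicy

theorem stmt_19_general (τ : ℝ)
    (μ : Fin 3 → ℝ) (hμ0 : μ 0 = 1 / 2) (hμ1 : μ 1 = 1 / 2) (hμ2 : μ 2 = 0)
    (πref : Fin 3 → ℝ) (href : ∀ y, πref y = 1 / 3)
    (pμ : Fin 3 → ℝ)
    (L : (Fin 3 → ℝ) → ℝ)
    (hL : ∀ π, L π = ∑ y, ∑ y', μ y * μ y' *
        (Real.log (π y * πref y' / (π y' * πref y)) - (pμ y - pμ y') / τ)^2) :
    (∀ π : Fin 3 → ℝ, (∀ y, 0 < π y) → ∑ y, π y = 1 →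
      π 0 / π 1 = Real.exp ((pμ 0 - pμ 1) / τ) →
      ∀ π' : Fin 3 → ℝ, (∀ y, 0 < π' y) → ∑ y, π' y = 1 → L π ≤ L π') ∧
    (∃ π₁ π₂ : Fin 3 → ℝ,
      ((∀ y, 0 < π₁ y) ∧ (∑ y, π₁ y = 1) ∧
        π₁ 0 / π₁ 1 = Real.exp ((pμ 0 - pμ 1) / τ)) ∧
      ((∀ y, 0 < π₂ y) ∧ (∑ y, π₂ y = 1) ∧
        π₂ 0 / π₂ 1 = Real.exp ((pμ 0 - pμ 1) / τ)) ∧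
      π₁ ≠ π₂) := by
  set d := (pμ 0 - pμ 1) / τ
  have hL_eq : ∀ π, L π = 1 / 2 * (Real.log (π 0 / π 1) - d) ^ 2 := by
    intro π
    simp only [hL, href, sub_div]
    rw [sum_sum_mul_sq_of_antisymm μ hμ2 _ fun y y' =>
      log_div_sub_sub_antisymm (π y * (1 / 3)) (π y' * (1 / 3)) (pμ y / τ) (pμ y' / τ)]
    rw [mul_div_mul_right _ _ (by norm_num), hμ0, hμ1, ← sub_div]
    ring
  have hexp := Real.exp_pos d
  have hexp' : 1 + Real.exp d ≠ 0 := by positivity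
  refine ⟨fun π _ _ hratio π' _ _ => ?_,
    ratioPolicy (Real.exp d) (1 / 2), ratioPolicy (Real.exp d) (1 / 4),
    ⟨ratioPolicy_pos hexp (by norm_num) (by norm_num), sum_ratioPolicy hexp',
      ratioPolicy_zero_div_one hexp' (by norm_num)⟩,
    ⟨ratioPolicy_pos hexp (by norm_num) (by norm_num), sum_ratioPolicy hexp',
      ratioPolicy_zero_div_one hexp' (by norm_num)⟩, fun h => ?_⟩
  · rw [hL_eq π, hL_eq π', hratio, Real.log_exp, sub_self, zero_pow two_ne_zero, mul_zero]
    positivity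
  · have := congrFun h 2
    simp only [ratioPolicy, Matrix.cons_val] at this
    norm_num at this

theorem stmt_19 (τ : ℝ) (hτ : 0 < τ)
    (p : Fin 3 → Fin 3 → ℝ) (hp01 : ∀ y y', 0 ≤ p y y' ∧ p y y' ≤ 1)
    (hp : ∀ y y', p y y' + p y' y = 1)
    (μ : Fin 3 → ℝ) (hμ0 : μ 0 = 1 / 2) (hμ1 : μ 1 = 1 / 2) (hμ2 : μ 2 = 0)
    (πref : Fin 3 → ℝ) (href : ∀ y, πref y = 1 / 3)
    (pμ : Fin 3 → ℝ) (hpμ : ∀ y, pμ y = ∑ y', μ y' * p y y')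
    (L : (Fin 3 → ℝ) → ℝ)
    (hL : ∀ π, L π = ∑ y, ∑ y', μ y * μ y' *
        (Real.log (π y * πref y' / (π y' * πref y)) - (pμ y - pμ y') / τ)^2) :
    (∀ π : Fin 3 → ℝ, (∀ y, 0 < π y) → ∑ y, π y = 1 →
      π 0 / π 1 = Real.exp ((pμ 0 - pμ 1) / τ) →
      ∀ π' : Fin 3 → ℝ, (∀ y, 0 < π' y) → ∑ y, π' y = 1 → L π ≤ L π') ∧
    (∃ π₁ π₂ : Fin 3 → ℝ,
      ((∀ y, 0 < π₁ y) ∧ (∑ y, π₁ y = 1) ∧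
        π₁ 0 / π₁ 1 = Real.exp ((pμ 0 - pμ 1) / τ)) ∧
      ((∀ y, 0 < π₂ y) ∧ (∑ y, π₂ y = 1) ∧
        π₂ 0 / π₂ 1 = Real.exp ((pμ 0 - pμ 1) / τ)) ∧
      π₁ ≠ π₂) :=
  stmt_19_general τ μ hμ0 hμ1 hμ2 πref href pμ L hL
end
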